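/- Let μ₀ be a mass distribution on ℤ^d with finite support and κ > 0. If (V₁, u₁) and (V₂, u₂) are stabilizing pairs for BS(μ₀, κ), then there exists a function w such that (V₁ ∩ V₂, w) is a stabilizing pair for BS(μ₀, κ). Consequently, there exists a stabilizing pair (V_*, u_*) for BS(μ₀, κ) with V_* ⊆ V for every stabilizing pair (V, u). -/

import Mathlib

/-!
Intersection: solve `Δw = -μ₀` on `(V₁ ∩ V₂)°` with `w = 0` elsewhere. Since `(V₁ ∩ V₂)° ⊆ Vᵢ°`,
the maximum principle gives `0 ≤ w ≤ uᵢ`. A boundary point `x` of `V₁ ∩ V₂` is a boundary point of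
some `Vᵢ`, where `w x = uᵢ x = 0`; hence `Δw x ≤ Δuᵢ x`, and `μ₀ + Δw ≤ κ` is inherited from `uᵢ`.
Closure under intersection makes a stabilizing set of least cardinality the least stabilizing set,
provided one exists.

Existence: for `d ≥ 2` the function `log (1 + |x|²)` is strictly subharmonic on `ℤ^d` (by a
Weierstrass product inequality), so on the Euclidean ball of radius `R` a multiple
`B (log (1 + R²) - log (1 + |x|²))` dominates the solution `w`. Next to the sphere this barrier is
`O(B / R)`, hence `Δw ≤ κ` on the boundary once `R` is large.
-/

open Filter

namespace Sandpile

/-- Lattice sites of `ℤ^d`. -/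
abbrev Site (d : ℕ) := Fin d → ℤ

/-- Two sites are neighbours iff their `ℓ¹`-distance equals `1`. -/
def nbr {d : ℕ} (x y : Site d) : Prop := (∑ i, |x i - y i|) = 1

/-- The (combinatorial) boundary of a set `V ⊆ ℤ^d`. -/
def bdry {d : ℕ} (V : Set (Site d)) : Set (Site d) :=
  {x | x ∈ V ∧ ∃ y, nbr x y ∧ y ∉ V}

/-- The (combinatorial) interior of a set `V ⊆ ℤ^d`. -/
def intr {d : ℕ} (V : Set (Site d)) : Set (Site d) := V \ bdry V

/-- The discrete Laplacian `Δu(x) = (1/(2d)) ∑_{y ∼ x} (u y - u x)`; the `2d`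
neighbours of `x` are exactly the points `x ± eᵢ`. -/
noncomputable def lap {d : ℕ} (u : Site d → ℝ) (x : Site d) : ℝ :=
  (1 / (2 * (d : ℝ))) *
    ∑ i : Fin d, ((u (x + Pi.single i 1) - u x) + (u (x - Pi.single i 1) - u x))

/-- A mass distribution: nonnegative with finite support. -/
def IsMassDist {d : ℕ} (μ : Site d → ℝ) : Prop :=
  (∀ x, 0 ≤ μ x) ∧ (Function.support μ).Finite

/-- Euclidean norm of a lattice point. -/
noncomputable def enorm {d : ℕ} (x : Site d) : ℝ :=
  Real.sqrt (∑ i, ((x i : ℝ)) ^ 2)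

/-- `(V, u)` is a stabilizing pair for `BS(μ₀, κ)`: `V` is finite, contains the support
of `μ₀`, and `u : ℤ^d → [0,∞)` vanishes outside the interior of `V`, satisfies
`Δu = -μ₀` on the interior of `V`, `u = 0` on `∂V`, and `μ₀ + Δu ≤ κ` on `∂V`. -/
def IsStabilizingPair {d : ℕ} (μ0 : Site d → ℝ) (κ : ℝ)
    (V : Set (Site d)) (u : Site d → ℝ) : Prop :=
  V.Finite ∧ Function.support μ0 ⊆ V ∧ (∀ x, 0 ≤ u x) ∧
  (∀ x ∉ intr V, u x = 0) ∧
  (∀ x ∈ intr V, lap u x = -μ0 x) ∧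
  (∀ x ∈ bdry V, u x = 0) ∧
  (∀ x ∈ bdry V, μ0 x + lap u x ≤ κ)

/-- *The* stabilizing pair of `BS(μ₀, κ)`: a stabilizing pair whose set of sites is
contained in the set of any other stabilizing pair. -/
def IsMinStabilizingPair {d : ℕ} (μ0 : Site d → ℝ) (κ : ℝ)
    (V : Set (Site d)) (u : Site d → ℝ) : Prop :=
  IsStabilizingPair μ0 κ V u ∧
  ∀ V' u', IsStabilizingPair μ0 κ V' u' → V ⊆ V'

/-- The point mass `n·δ₀` at the origin. -/
def pointMass (d : ℕ) (n : ℝ) : Site d → ℝ := fun x => if x = 0 then n else 0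

end Sandpile

theorem Finset.pow_card_mul_sub_sum_le_mul_prod_sub {R ι : Type*} [CommRing R] [LinearOrder R]
    [IsStrictOrderedRing R] (s : Finset ι) {a : ι → R} {c : R} (h0 : ∀ i ∈ s, 0 ≤ a i)
    (h1 : ∀ i ∈ s, a i ≤ c) : c ^ s.card * (c - ∑ i ∈ s, a i) ≤ c * ∏ i ∈ s, (c - a i) := by
  classical
  induction s using Finset.cons_induction with
  | empty => simp
  | cons j s hj ih =>
    simp only [Finset.mem_cons, forall_eq_or_imp] at h0 h1
    have hc : 0 ≤ c := h0.1.trans h1.1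
    have hsum : 0 ≤ ∑ i ∈ s, a i := Finset.sum_nonneg h0.2
    rw [Finset.card_cons, Finset.sum_cons, Finset.prod_cons]
    calc c ^ (s.card + 1) * (c - (a j + ∑ i ∈ s, a i))
        ≤ (c - a j) * (c ^ s.card * (c - ∑ i ∈ s, a i)) := by
          have := mul_nonneg (mul_nonneg (pow_nonneg hc s.card) h0.1) hsum
          rw [pow_succ]
          linear_combination this
      _ ≤ (c - a j) * (c * ∏ i ∈ s, (c - a i)) :=
          mul_le_mul_of_nonneg_left (ih h0.2 h1.2) (sub_nonneg.mpr h1.1)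
      _ = c * ((c - a j) * ∏ i ∈ s, (c - a i)) := by ring

/- With `S = 1 + ∑ aᵢ²`, the `i`-th factor is `(S + 1 + 2aᵢ)(S + 1 - 2aᵢ)`, the product of the
values of `1 + |·|²` at the two neighbours `a ± eᵢ`. -/
theorem sq_pow_card_lt_prod {ι : Type*} [Fintype ι] (hι : 2 ≤ Fintype.card ι) (a : ι → ℝ) :
    ((1 + ∑ i, a i ^ 2) ^ 2) ^ Fintype.card ι
      < ∏ i, ((1 + ∑ j, a j ^ 2 + 1) ^ 2 - 4 * a i ^ 2) := by
  set S := 1 + ∑ i, a i ^ 2 with hS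
  set n := Fintype.card ι
  have hsum : ∑ i, 4 * a i ^ 2 = 4 * (S - 1) := by rw [← Finset.mul_sum, hS]; ring
  have hS1 : 1 ≤ S := by linarith [Finset.sum_nonneg fun i (_ : i ∈ Finset.univ) => sq_nonneg (a i)]
  have hle : ∀ i, 4 * a i ^ 2 ≤ (S + 1) ^ 2 := fun i => by
    have := Finset.single_le_sum (f := fun j => 4 * a j ^ 2) (fun j _ => by positivity)
      (Finset.mem_univ i)
    nlinarith [sq_nonneg (S - 1)]
  have hweierstrass := Finset.univ.pow_card_mul_sub_sum_le_mul_prod_sub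
    (fun i _ => by positivity) (fun i _ => hle i)
  rw [hsum, Finset.card_univ] at hweierstrass
  obtain ⟨k, hk⟩ : ∃ k, n = k + 2 := ⟨n - 2, by omega⟩
  have hc : 0 < (S + 1) ^ 2 := by positivity
  have hcore : S ^ 4 < (S + 1) ^ 2 * ((S + 1) ^ 2 - 4 * (S - 1)) := by nlinarith
  have hkey : (S + 1) ^ 2 * (S ^ 2) ^ n < ((S + 1) ^ 2) ^ n * ((S + 1) ^ 2 - 4 * (S - 1)) :=
    calc (S + 1) ^ 2 * (S ^ 2) ^ n = (S ^ 2) ^ k * ((S + 1) ^ 2 * S ^ 4) := by rw [hk]; ring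
      _ ≤ ((S + 1) ^ 2) ^ k * ((S + 1) ^ 2 * S ^ 4) := by gcongr; linarith
      _ < ((S + 1) ^ 2) ^ k * ((S + 1) ^ 2 * ((S + 1) ^ 2 * ((S + 1) ^ 2 - 4 * (S - 1)))) := by
          gcongr
      _ = ((S + 1) ^ 2) ^ n * ((S + 1) ^ 2 - 4 * (S - 1)) := by rw [hk]; ring
  exact lt_of_mul_lt_mul_left (hkey.trans_le hweierstrass) hc.le

lemma exists_le_mul_of_support_finite {α : Type*} {f g : α → ℝ}
    (hf : (Function.support f).Finite) (hg : ∀ x, 0 < g x) : ∃ B, 0 ≤ B ∧ ∀ x, f x ≤ B * g x := by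
  have hterm : ∀ y, 0 ≤ |f y| / g y := fun y => div_nonneg (abs_nonneg _) (hg y).le
  set B := ∑ y ∈ hf.toFinset, |f y| / g y
  have hB : 0 ≤ B := Finset.sum_nonneg fun y _ => hterm y
  refine ⟨B, hB, fun x => ?_⟩
  by_cases hx : x ∈ Function.support f
  · calc f x ≤ |f x| / g x * g x := by rw [div_mul_cancel₀ _ (hg x).ne']; exact le_abs_self _
      _ ≤ B * g x := by
        gcongr
        · exact (hg x).le
        · exact Finset.single_le_sum (f := fun y => |f y| / g y) (fun y _ => hterm y)
            (hf.mem_toFinset.mpr hx)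
  · rw [Function.notMem_support.mp hx]
    exact mul_nonneg hB (hg x).le

lemma log_one_add_sq_sub_log_le {R : ℝ} (hR : 4 ≤ R) :
    Real.log (1 + R ^ 2) - Real.log (1 + (R - 2) ^ 2) ≤ 16 / R := by
  have hb : 0 < 1 + (R - 2) ^ 2 := by positivity
  calc Real.log (1 + R ^ 2) - Real.log (1 + (R - 2) ^ 2)
      = Real.log ((1 + R ^ 2) / (1 + (R - 2) ^ 2)) := (Real.log_div (by positivity) hb.ne').symm
    _ ≤ (1 + R ^ 2) / (1 + (R - 2) ^ 2) - 1 := Real.log_le_sub_one_of_pos (by positivity)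
    _ ≤ 16 / R := by
      rw [div_sub_one hb.ne', div_le_div_iff₀ hb (by linarith)]
      nlinarith

theorem Set.exists_subset_forall_of_inter_mem {α : Type*} {P : Set α → Prop}
    (hfin : ∀ s, P s → s.Finite) (hne : ∃ s, P s) (hinter : ∀ s t, P s → P t → P (s ∩ t)) :
    ∃ s, P s ∧ ∀ t, P t → s ⊆ t := by
  obtain ⟨s, hs, hmin⟩ := (InvImage.wf Set.ncard wellFounded_lt).has_min {s | P s} hne
  refine ⟨s, hs, fun t ht => ?_⟩
  have : s ∩ t = s := Set.eq_of_subset_of_ncard_le Set.inter_subset_left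
    (not_lt.mp (hmin _ (hinter s t hs ht))) (hfin s hs)
  exact this ▸ Set.inter_subset_right

namespace Sandpile

variable {d : ℕ}

lemma nbr_add_single (x : Site d) (i : Fin d) : nbr x (x + Pi.single i 1) := by
  simp [nbr, Pi.single_apply, apply_ite (abs : ℤ → ℤ)]

lemma nbr_sub_single (x : Site d) (i : Fin d) : nbr x (x - Pi.single i 1) := by
  simp [nbr, Pi.single_apply, apply_ite (abs : ℤ → ℤ)]

lemma nbr_comm {x y : Site d} : nbr x y ↔ nbr y x := by
  simp only [nbr, abs_sub_comm]

lemma abs_sub_le_one_of_nbr {x y : Site d} (h : nbr x y) (i : Fin d) : |x i - y i| ≤ 1 :=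
  h ▸ Finset.single_le_sum (fun j _ => abs_nonneg (x j - y j)) (Finset.mem_univ i)

lemma mem_intr {V : Set (Site d)} {x : Site d} :
    x ∈ intr V ↔ x ∈ V ∧ ∀ y, nbr x y → y ∈ V := by
  simp [intr, bdry]

lemma not_mem_intr_of_mem_bdry {V : Set (Site d)} {x : Site d} (hx : x ∈ bdry V) :
    x ∉ intr V :=
  fun h => h.2 hx

lemma intr_subset (V : Set (Site d)) : intr V ⊆ V := Set.sdiff_subset

lemma intr_mono {V W : Set (Site d)} (h : V ⊆ W) : intr V ⊆ intr W := fun _ hx =>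
  mem_intr.mpr ⟨h (mem_intr.mp hx).1, fun y hxy => h ((mem_intr.mp hx).2 y hxy)⟩

lemma bdry_inter_subset (V₁ V₂ : Set (Site d)) : bdry (V₁ ∩ V₂) ⊆ bdry V₁ ∪ bdry V₂ := by
  rintro x ⟨⟨hx₁, hx₂⟩, y, hxy, hy⟩
  rw [Set.mem_inter_iff, not_and_or] at hy
  exact hy.imp (fun hy => ⟨hx₁, y, hxy, hy⟩) (fun hy => ⟨hx₂, y, hxy, hy⟩)

noncomputable def lapLinearMap : (Site d → ℝ) →ₗ[ℝ] Site d → ℝ where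
  toFun := lap
  map_add' u v := by
    ext x
    simp only [lap, Pi.add_apply, ← mul_add, ← Finset.sum_add_distrib]
    congr 1
    exact Finset.sum_congr rfl fun i _ => by ring
  map_smul' c u := by
    ext x
    simp only [lap, Pi.smul_apply, smul_eq_mul, RingHom.id_apply, ← mul_sub, ← mul_add,
      ← Finset.mul_sum]
    ring

lemma lap_sub (u v : Site d → ℝ) (x : Site d) : lap (u - v) x = lap u x - lap v x :=
  congrFun (lapLinearMap.map_sub u v) x

lemma lap_smul (c : ℝ) (u : Site d → ℝ) (x : Site d) : lap (c • u) x = c * lap u x :=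
  congrFun (lapLinearMap.map_smul c u) x

lemma lap_zero (x : Site d) : lap 0 x = 0 :=
  congrFun (map_zero lapLinearMap) x

lemma lap_const (c : ℝ) (x : Site d) : lap (fun _ => c) x = 0 := by
  simp [lap]

lemma lap_mono {u v : Site d → ℝ} (h : u ≤ v) {x : Site d} (hx : u x = v x) :
    lap u x ≤ lap v x := by
  unfold lap
  rw [hx]
  gcongr with i <;> apply h

lemma lap_le_of_forall_nbr_le (hd : 0 < d) {u : Site d → ℝ} {x : Site d} {c : ℝ}
    (hx : u x = 0) (h : ∀ y, nbr x y → u y ≤ c) : lap u x ≤ c := by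
  have hterm : ∀ i : Fin d,
      (u (x + Pi.single i 1) - u x) + (u (x - Pi.single i 1) - u x) ≤ 2 * c := fun i => by
    linarith [h _ (nbr_add_single x i), h _ (nbr_sub_single x i)]
  calc lap u x ≤ 1 / (2 * (d : ℝ)) * ∑ _i : Fin d, 2 * c := by
        unfold lap; gcongr with i; exact hterm i
    _ = c := by simp; field_simp

lemma apply_add_single_eq_of_lap_nonneg {h : Site d → ℝ} {x : Site d} (hlap : 0 ≤ lap h x)
    (hmax : ∀ y, nbr x y → h y ≤ h x) (i : Fin d) : h (x + Pi.single i 1) = h x := by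
  set t : Fin d → ℝ := fun j => (h (x + Pi.single j 1) - h x) + (h (x - Pi.single j 1) - h x)
  have ht : ∀ j, t j ≤ 0 := fun j => by
    linarith [hmax _ (nbr_add_single x j), hmax _ (nbr_sub_single x j)]
  have hsum : 0 ≤ ∑ j, t j := by
    have hd : (0 : ℝ) < 1 / (2 * d) := by have := i.pos; positivity
    exact (mul_nonneg_iff_of_pos_left hd).mp hlap
  have hti : t i = 0 :=
    (Finset.sum_eq_zero_iff_of_nonpos fun j _ => ht j).mp
      (le_antisymm (Finset.sum_nonpos fun j _ => ht j) hsum) i (Finset.mem_univ i)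
  linarith [hmax _ (nbr_add_single x i), hmax _ (nbr_sub_single x i)]

theorem nonpos_of_lap_nonneg (hd : 0 < d) {D : Set (Site d)} (hD : D.Finite) {h : Site d → ℝ}
    (hlap : ∀ x ∈ D, 0 ≤ lap h x) (hbd : ∀ x ∈ D, ∀ y, nbr x y → y ∉ D → h y ≤ 0) :
    ∀ x ∈ D, h x ≤ 0 := by
  by_contra! ⟨x₀, hx₀D, hx₀⟩
  obtain ⟨x₁, hx₁D, hx₁max⟩ := D.exists_max_image h hD ⟨x₀, hx₀D⟩
  have hm : 0 < h x₁ := hx₀.trans_le (hx₁max x₀ hx₀D)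
  -- a maximiser with the largest `i₀`-th coordinate has a maximiser as neighbour in direction `i₀`
  let i₀ : Fin d := ⟨0, hd⟩
  obtain ⟨y, ⟨hyD, hym⟩, hytop⟩ := {y ∈ D | h y = h x₁}.exists_max_image (· i₀)
    (hD.subset (Set.sep_subset _ _)) ⟨x₁, hx₁D, rfl⟩
  have hnbr : ∀ z, nbr y z → h z ≤ h y := fun z hz => by
    by_cases hzD : z ∈ D
    · exact hym ▸ hx₁max z hzD
    · linarith [hbd y hyD z hz hzD]
  have hstep := apply_add_single_eq_of_lap_nonneg (hlap y hyD) hnbr i₀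
  have hstepD : y + Pi.single i₀ 1 ∈ D := by
    by_contra hz
    linarith [hbd y hyD _ (nbr_add_single y i₀) hz]
  have := hytop _ ⟨hstepD, hstep.trans hym⟩
  simp at this

theorem le_of_lap_le (hd : 0 < d) {D : Set (Site d)} (hD : D.Finite) {u v : Site d → ℝ}
    (hlap : ∀ x ∈ D, lap v x ≤ lap u x) (hbd : ∀ x ∈ D, ∀ y, nbr x y → y ∉ D → u y ≤ v y) :
    ∀ x ∈ D, u x ≤ v x := by
  have := nonpos_of_lap_nonneg hd hD (h := u - v)
    (fun x hx => by rw [lap_sub]; linarith [hlap x hx])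
    (fun x hx y hxy hy => by simpa using hbd x hx y hxy hy)
  exact fun x hx => by simpa using this x hx

theorem exists_lap_eq (hd : 0 < d) {D : Set (Site d)} (hD : D.Finite) (f : Site d → ℝ) :
    ∃ w : Site d → ℝ, (∀ x ∉ D, w x = 0) ∧ ∀ x ∈ D, lap w x = f x := by
  have : Finite D := hD.to_subtype
  let E := Function.ExtendByZero.linearMap ℝ ((↑) : D → Site d)
  have hE_out (g : D → ℝ) (x : Site d) (hx : x ∉ D) : E g x = 0 :=
    Function.extend_apply' _ _ _ (by rintro ⟨y, rfl⟩; exact hx y.2)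
  have hE_in (g : D → ℝ) (y : D) : E g y = g y := Subtype.val_injective.extend_apply _ _ _
  let T := LinearMap.funLeft ℝ ℝ ((↑) : D → Site d) ∘ₗ lapLinearMap ∘ₗ E
  have hT : Function.Injective T := by
    rw [← LinearMap.ker_eq_bot, LinearMap.ker_eq_bot']
    intro g hg
    have hlap (x : Site d) (hx : x ∈ D) : lap (E g) x = lap 0 x :=
      (congrFun hg ⟨x, hx⟩).trans (lap_zero x).symm
    have hle := le_of_lap_le hd hD (u := E g) (v := 0) (fun x hx => (hlap x hx).ge)
      (fun x _ y _ hy => (hE_out g y hy).le)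
    have hge := le_of_lap_le hd hD (u := 0) (v := E g) (fun x hx => (hlap x hx).le)
      (fun x _ y _ hy => (hE_out g y hy).ge)
    ext y
    rw [Pi.zero_apply, ← hE_in g y]
    exact le_antisymm (hle y y.2) (hge y y.2)
  obtain ⟨g, hg⟩ := LinearMap.injective_iff_surjective.mp hT fun x => f x
  exact ⟨E g, hE_out g, fun x hx => congrFun hg ⟨x, hx⟩⟩

section StabilizingPair

variable {μ0 : Site d → ℝ} {κ : ℝ} {V : Set (Site d)} {u w : Site d → ℝ}

theorem isStabilizingPair_of_lap_eq (hd : 0 < d) (hμ0 : ∀ x, 0 ≤ μ0 x) (hV : V.Finite)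
    (hsupp : Function.support μ0 ⊆ V) (hw0 : ∀ x ∉ intr V, w x = 0)
    (hlap : ∀ x ∈ intr V, lap w x = -μ0 x) (hκ : ∀ x ∈ bdry V, μ0 x + lap w x ≤ κ) :
    IsStabilizingPair μ0 κ V w := by
  have hnonneg := le_of_lap_le hd (hV.subset (intr_subset V)) (u := 0) (v := w)
    (fun x hx => by rw [hlap x hx, lap_zero]; linarith [hμ0 x])
    (fun x _ y _ hy => (hw0 y hy).ge)
  refine ⟨hV, hsupp, fun x => ?_, hw0, hlap, fun x hx => hw0 x (not_mem_intr_of_mem_bdry hx), hκ⟩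
  by_cases hx : x ∈ intr V
  · exact hnonneg x hx
  · exact (hw0 x hx).ge

theorem IsStabilizingPair.le_of_lap_eq (hd : 0 < d) (h : IsStabilizingPair μ0 κ V u)
    {D : Set (Site d)} (hD : D ⊆ intr V) (hw0 : ∀ x ∉ D, w x = 0)
    (hlap : ∀ x ∈ D, lap w x = -μ0 x) : w ≤ u := by
  obtain ⟨hV, -, hu, -, hulap, -⟩ := h
  have hle := le_of_lap_le hd (hV.subset (hD.trans (intr_subset V))) (u := w) (v := u)
    (fun x hx => by rw [hlap x hx, hulap x (hD hx)])
    (fun x _ y _ hy => hw0 y hy ▸ hu y)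
  intro x
  by_cases hx : x ∈ D
  · exact hle x hx
  · exact hw0 x hx ▸ hu x

theorem IsStabilizingPair.exists_inter (hd : 0 < d) (hμ0 : ∀ x, 0 ≤ μ0 x)
    {V₁ V₂ : Set (Site d)} {u₁ u₂ : Site d → ℝ}
    (h₁ : IsStabilizingPair μ0 κ V₁ u₁) (h₂ : IsStabilizingPair μ0 κ V₂ u₂) :
    ∃ w, IsStabilizingPair μ0 κ (V₁ ∩ V₂) w := by
  have hV : (V₁ ∩ V₂).Finite := h₁.1.inter_of_left V₂
  obtain ⟨w, hw0, hwlap⟩ := exists_lap_eq hd (hV.subset (intr_subset _)) (-μ0)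
  have hw₁ := h₁.le_of_lap_eq hd (intr_mono Set.inter_subset_left) hw0 hwlap
  have hw₂ := h₂.le_of_lap_eq hd (intr_mono Set.inter_subset_right) hw0 hwlap
  refine ⟨w, isStabilizingPair_of_lap_eq hd hμ0 hV (Set.subset_inter h₁.2.1 h₂.2.1) hw0 hwlap
    fun x hx => ?_⟩
  have hwx : w x = 0 := hw0 x (not_mem_intr_of_mem_bdry hx)
  obtain ⟨-, -, -, -, -, hbd₁, hκ₁⟩ := h₁
  obtain ⟨-, -, -, -, -, hbd₂, hκ₂⟩ := h₂
  rcases bdry_inter_subset V₁ V₂ hx with hx | hx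
  · linarith [hκ₁ x hx, lap_mono hw₁ (hwx.trans (hbd₁ x hx).symm)]
  · linarith [hκ₂ x hx, lap_mono hw₂ (hwx.trans (hbd₂ x hx).symm)]

end StabilizingPair

noncomputable def toEuclidean (x : Site d) : EuclideanSpace ℝ (Fin d) :=
  WithLp.toLp 2 fun i => (x i : ℝ)

lemma toEuclidean_sub (x y : Site d) : toEuclidean (x - y) = toEuclidean x - toEuclidean y := by
  ext i
  simp [toEuclidean]

lemma norm_toEuclidean_sq (x : Site d) : ‖toEuclidean x‖ ^ 2 = ∑ i, (x i : ℝ) ^ 2 := by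
  simp [EuclideanSpace.norm_sq_eq, toEuclidean]

lemma abs_le_norm_toEuclidean (x : Site d) (i : Fin d) : |(x i : ℝ)| ≤ ‖toEuclidean x‖ :=
  PiLp.norm_apply_le (toEuclidean x) i

lemma norm_toEuclidean_sub_le_one {x y : Site d} (h : nbr x y) :
    ‖toEuclidean x - toEuclidean y‖ ≤ 1 := by
  have hsq : ∀ i, ((x i - y i : ℤ) : ℝ) ^ 2 ≤ |((x i - y i : ℤ) : ℝ)| := fun i => by
    have := abs_sub_le_one_of_nbr h i
    rw [← Int.cast_abs, ← Int.cast_pow, Int.cast_le, ← sq_abs]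
    nlinarith [abs_nonneg (x i - y i)]
  have : ‖toEuclidean x - toEuclidean y‖ ^ 2 ≤ 1 := by
    rw [← toEuclidean_sub]
    calc _ ≤ ∑ i, |((x i - y i : ℤ) : ℝ)| := by
          rw [norm_toEuclidean_sq]; exact Finset.sum_le_sum fun i _ => hsq i
      _ = 1 := by exact_mod_cast h
  nlinarith [norm_nonneg (toEuclidean x - toEuclidean y)]

noncomputable def logBarrier (x : Site d) : ℝ := Real.log (1 + ‖toEuclidean x‖ ^ 2)

lemma sum_sq_add_single (x : Site d) (i : Fin d) (ε : ℤ) :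
    ∑ j, ((x + Pi.single i ε : Site d) j : ℝ) ^ 2 = ∑ j, (x j : ℝ) ^ 2 + 2 * ε * x i + ε ^ 2 := by
  have h : ∀ j, ((x + Pi.single i ε : Site d) j : ℝ) ^ 2
      = (x j : ℝ) ^ 2 + Pi.single (M := fun _ => ℝ) i (2 * ε * x i + ε ^ 2) j := fun j => by
    rcases eq_or_ne j i with rfl | hj
    · simp; ring
    · simp [hj]
  simp only [h, Finset.sum_add_distrib, Finset.sum_pi_single', Finset.mem_univ, if_true]
  ring

theorem lap_logBarrier_pos (hd : 2 ≤ d) (x : Site d) : 0 < lap logBarrier x := by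
  set S : ℝ := 1 + ∑ i, (x i : ℝ) ^ 2 with hS
  have hshift : ∀ i (ε : ℤ), logBarrier (x + Pi.single i ε) = Real.log (S + 2 * ε * x i + ε ^ 2) :=
    fun i ε => by rw [logBarrier, norm_toEuclidean_sq, sum_sq_add_single, hS]; ring_nf
  have hpos : ∀ i, 0 < S + 2 * x i + 1 ∧ 0 < S - 2 * x i + 1 := fun i => by
    have := Finset.single_le_sum (f := fun j => (x j : ℝ) ^ 2) (fun j _ => sq_nonneg _)
      (Finset.mem_univ i)
    constructor <;> nlinarith [sq_nonneg ((x i : ℝ) + 1), sq_nonneg ((x i : ℝ) - 1)]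
  have hterm : ∀ i, (logBarrier (x + Pi.single i 1) - logBarrier x)
      + (logBarrier (x - Pi.single i 1) - logBarrier x)
      = Real.log ((S + 1) ^ 2 - 4 * (x i : ℝ) ^ 2) - Real.log (S ^ 2) := fun i => by
    have hx : logBarrier x = Real.log S := by rw [logBarrier, norm_toEuclidean_sq]
    rw [sub_eq_add_neg x, ← Pi.single_neg, hshift, hshift, hx,
      show (S + 1) ^ 2 - 4 * (x i : ℝ) ^ 2 = (S + 2 * x i + 1) * (S - 2 * x i + 1) by ring,
      Real.log_mul (hpos i).1.ne' (hpos i).2.ne', Real.log_pow]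
    push_cast
    ring_nf
  have hprod := sq_pow_card_lt_prod (by simpa using hd) fun i => (x i : ℝ)
  simp only [Fintype.card_fin] at hprod
  have hP : ∀ i, (S + 1) ^ 2 - 4 * (x i : ℝ) ^ 2 ≠ 0 := fun i => by
    nlinarith [mul_pos (hpos i).1 (hpos i).2]
  unfold lap
  refine mul_pos (by positivity) ?_
  rw [Finset.sum_congr rfl fun i _ => hterm i, Finset.sum_sub_distrib,
    ← Real.log_prod fun i _ => hP i, Finset.sum_const, Finset.card_univ, Fintype.card_fin,
    nsmul_eq_mul, ← Real.log_pow, sub_pos]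
  exact Real.log_lt_log (by positivity) hprod

def latticeBall (R : ℝ) : Set (Site d) := {x | ‖toEuclidean x‖ ≤ R}

lemma finite_latticeBall (R : ℝ) : (latticeBall R : Set (Site d)).Finite := by
  refine (Set.Finite.pi fun _ => Set.finite_Icc (-⌈R⌉) ⌈R⌉).subset fun x hx i _ => ?_
  have : ((|x i| : ℤ) : ℝ) ≤ ⌈R⌉ := by
    push_cast
    exact (abs_le_norm_toEuclidean x i).trans (hx.trans (Int.le_ceil R))
  exact abs_le.mp (by exact_mod_cast this)

lemma mem_intr_latticeBall {R : ℝ} {x : Site d} (hx : ‖toEuclidean x‖ ≤ R - 1) :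
    x ∈ intr (latticeBall R) := by
  refine mem_intr.mpr ⟨show ‖toEuclidean x‖ ≤ R by linarith, fun y hxy => ?_⟩
  have := norm_toEuclidean_sub_le_one (nbr_comm.mp hxy)
  show ‖toEuclidean y‖ ≤ R
  linarith [norm_le_norm_add_norm_sub' (toEuclidean y) (toEuclidean x)]

lemma sub_two_lt_norm_of_mem_bdry_latticeBall {R : ℝ} {x z : Site d} (hx : x ∈ bdry (latticeBall R))
    (hxz : nbr x z) : R - 2 < ‖toEuclidean z‖ := by
  obtain ⟨-, y, hxy, hy⟩ := hx
  have hy : R < ‖toEuclidean y‖ := not_le.mp hy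
  linarith [norm_le_norm_add_norm_sub' (toEuclidean y) (toEuclidean z),
    norm_sub_le_norm_sub_add_norm_sub (toEuclidean y) (toEuclidean x) (toEuclidean z),
    norm_toEuclidean_sub_le_one (nbr_comm.mp hxy), norm_toEuclidean_sub_le_one hxz]

theorem le_mul_sub_logBarrier_of_lap_eq (hd : 0 < d) {R B : ℝ} (hB0 : 0 ≤ B) {μ0 w : Site d → ℝ}
    (hB : ∀ x, μ0 x ≤ B * lap logBarrier x) (hw0 : ∀ x ∉ intr (latticeBall R), w x = 0)
    (hwlap : ∀ x ∈ intr (latticeBall R), lap w x = -μ0 x) (x : Site d)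
    (hx : x ∈ intr (latticeBall R)) :
    w x ≤ B * (Real.log (1 + R ^ 2) - logBarrier x) := by
  have := le_of_lap_le hd ((finite_latticeBall R).subset (intr_subset _)) (u := w)
    (v := (fun _ => B * Real.log (1 + R ^ 2)) - B • logBarrier)
    (fun y hy => by rw [lap_sub, lap_const, lap_smul, hwlap y hy]; linarith [hB y])
    (fun y hy z hyz hz => by
      have hzR : ‖toEuclidean z‖ ≤ R := (mem_intr.mp hy).2 z hyz
      have : logBarrier z ≤ Real.log (1 + R ^ 2) := by unfold logBarrier; gcongr
      simp only [hw0 z hz, Pi.sub_apply, Pi.smul_apply, smul_eq_mul]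
      nlinarith)
    x hx
  simpa [mul_sub] using this

theorem exists_isStabilizingPair (hd : 2 ≤ d) {μ0 : Site d → ℝ} (hμ0 : IsMassDist μ0) {κ : ℝ}
    (hκ : 0 < κ) : ∃ V u, IsStabilizingPair μ0 κ V u := by
  obtain ⟨B, hB0, hB⟩ := exists_le_mul_of_support_finite hμ0.2 (lap_logBarrier_pos hd)
  obtain ⟨r, hr⟩ := (hμ0.2.image fun x => ‖toEuclidean x‖).bddAbove
  -- `R` puts the support inside the ball and makes the barrier `≤ 16 B / R ≤ κ` near its boundary
  set R := max (max 4 (16 * B / κ)) (r + 1)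
  have hR4 : 4 ≤ R := (le_max_left _ _).trans (le_max_left _ _)
  have hRκ : 16 * B ≤ κ * R := by
    rw [mul_comm κ, ← div_le_iff₀ hκ]; exact (le_max_right _ _).trans (le_max_left _ _)
  have hsupp : Function.support μ0 ⊆ intr (latticeBall R) := fun x hx =>
    mem_intr_latticeBall (by linarith [hr ⟨x, hx, rfl⟩, le_max_right (max 4 (16 * B / κ)) (r + 1)])
  have hV := finite_latticeBall (d := d) R
  obtain ⟨w, hw0, hwlap⟩ := exists_lap_eq (by omega) (hV.subset (intr_subset _)) (-μ0)
  refine ⟨_, w, isStabilizingPair_of_lap_eq (by omega) hμ0.1 hV (hsupp.trans (intr_subset _))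
    hw0 hwlap fun x hx => ?_⟩
  have hxint := not_mem_intr_of_mem_bdry hx
  rw [Function.notMem_support.mp fun h => hxint (hsupp h), zero_add]
  refine lap_le_of_forall_nbr_le (by omega) (hw0 x hxint) fun z hxz => ?_
  by_cases hz : z ∈ intr (latticeBall R)
  · have hzR := sub_two_lt_norm_of_mem_bdry_latticeBall hx hxz
    have : Real.log (1 + (R - 2) ^ 2) ≤ logBarrier z := by
      unfold logBarrier; gcongr; linarith
    calc w z ≤ B * (Real.log (1 + R ^ 2) - logBarrier z) :=
          le_mul_sub_logBarrier_of_lap_eq (by omega) hB0 hB hw0 hwlap z hz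
      _ ≤ B * (16 / R) := by gcongr; linarith [log_one_add_sq_sub_log_le hR4]
      _ ≤ κ := by rw [mul_div_assoc', div_le_iff₀ (by linarith)]; linarith
  · rw [hw0 z hz]; exact hκ.le

/-- Let `μ₀` be a mass distribution on `ℤ^d` with finite support and
`κ > 0`. If `(V₁, u₁)` and `(V₂, u₂)` are stabilizing pairs for `BS(μ₀, κ)`, then
there is a function `w` such that `(V₁ ∩ V₂, w)` is a stabilizing pair for `BS(μ₀, κ)`.
Consequently, there exists a stabilizing pair `(V_*, u_*)` for `BS(μ₀, κ)` with
`V_* ⊆ V` for every stabilizing pair `(V, u)`. -/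
theorem stmt6 {d : ℕ} (hd : 2 ≤ d) (μ0 : Site d → ℝ) (hμ0 : IsMassDist μ0)
    (κ : ℝ) (hκ : 0 < κ) :
    (∀ (V₁ V₂ : Set (Site d)) (u₁ u₂ : Site d → ℝ),
      IsStabilizingPair μ0 κ V₁ u₁ → IsStabilizingPair μ0 κ V₂ u₂ →
      ∃ w : Site d → ℝ, IsStabilizingPair μ0 κ (V₁ ∩ V₂) w) ∧
    ∃ (Vs : Set (Site d)) (us : Site d → ℝ), IsMinStabilizingPair μ0 κ Vs us := by
  have hinter : ∀ (V₁ V₂ : Set (Site d)) (u₁ u₂ : Site d → ℝ),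
      IsStabilizingPair μ0 κ V₁ u₁ → IsStabilizingPair μ0 κ V₂ u₂ →
      ∃ w : Site d → ℝ, IsStabilizingPair μ0 κ (V₁ ∩ V₂) w :=
    fun _ _ _ _ h₁ h₂ => h₁.exists_inter (by omega) hμ0.1 h₂
  refine ⟨hinter, ?_⟩
  obtain ⟨Vs, ⟨us, hVs⟩, hmin⟩ := Set.exists_subset_forall_of_inter_mem
    (P := fun V => ∃ u, IsStabilizingPair μ0 κ V u) (fun V ⟨_, hV⟩ => hV.1)
    (exists_isStabilizingPair hd hμ0 hκ) fun V₁ V₂ ⟨u₁, h₁⟩ ⟨u₂, h₂⟩ => hinter V₁ V₂ u₁ u₂ h₁ h₂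
  exact ⟨Vs, us, hVs, fun V u hV => hmin V ⟨u, hV⟩⟩

end Sandpile
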